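/- Let 0 < α ≤ η/2 and 0 < β ≤ α^{3/2}/9, and let G be a graph on n vertices. If G is (η, α)-robust and there is a partition {S₁′, S₂′} of V(G) with e(S₁′) < β²n² and e(S₂′) < β²n², then there is a partition {S₁, S₂} of V(G) such that e(Sᵢ) ≤ βn² for i ∈ {1,2}, every vertex of Sᵢ has at least (η/2)n neighbors in S_{3−i}, and the bipartite subgraph H = G[S₁, S₂] is (η/2, α/2)-robust. -/

import Mathlib

/-- Number of ordered pairs `(x, y)` with `x ∈ X`, `y ∈ Y` and `xy ∈ E(G)`. -/
noncomputable def eBetween {V : Type*} (G : SimpleGraph V) (X Y : Set V) : ℕ :=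
  {p : V × V | p.1 ∈ X ∧ p.2 ∈ Y ∧ G.Adj p.1 p.2}.ncard

/-- Number of edges of `G` with both endpoints in `S`. -/
noncomputable def eIn {V : Type*} (G : SimpleGraph V) (S : Set V) : ℕ :=
  {e ∈ G.edgeSet | ∀ v ∈ e, v ∈ S}.ncard

/-- Number of neighbors of `v` inside the set `S`. -/
noncomputable def nbrIn {V : Type*} (G : SimpleGraph V) (v : V) (S : Set V) : ℕ :=
  (G.neighborSet v ∩ S).ncard

/-- The bipartite subgraph `G[S, Sᶜ]` of `G` consisting of edges with one endpoint in `S`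
and the other outside `S`. -/
def bip {V : Type*} (G : SimpleGraph V) (S : Set V) : SimpleGraph V where
  Adj u v := G.Adj u v ∧ ((u ∈ S ∧ v ∉ S) ∨ (u ∉ S ∧ v ∈ S))
  symm := by
    constructor
    intro u v h
    exact ⟨h.1.symm, h.2.elim (fun h' => Or.inr ⟨h'.2, h'.1⟩) (fun h' => Or.inl ⟨h'.2, h'.1⟩)⟩
  loopless := by
    constructor
    intro v h
    rcases h.2 with ⟨h1, h2⟩ | ⟨h1, h2⟩
    · exact h2 h1
    · exact h1 h2

/-!
Take `S` to be a maximum cut of `G`. Moving a single vertex across does not increase the cut,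
so every vertex has at least half of its neighbours, hence at least `(η/2)n`, on the other side;
and since `e(S) + e(Sᶜ) = e(G) - e(S, Sᶜ)` is minimum, it is below `2β²n²`. In `H = G[S, Sᶜ]`
a set `X` with `|X| ≤ (α/2)n` sends at least `|X|((η/2)n - |X|) ≥ (α/2)|X|n` edges out by the
degree bound alone. If both `X` and `Xᶜ` are larger, `|X||Xᶜ| ≥ α²n²/4`, and passing from `G`
to `H` loses at most `4β²n² ≤ (α/2)|X||Xᶜ|` of the `α|X||Xᶜ|` edges across.
-/

lemma sq_le_of_le_rpow_three_halves_div {α β : ℝ} (c : ℝ) (hα : 0 ≤ α) (hβ : 0 ≤ β)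
    (h : β ≤ α ^ ((3 : ℝ) / 2) / c) : β ^ 2 ≤ α ^ 3 / c ^ 2 :=
  calc β ^ 2 ≤ (α ^ ((3 : ℝ) / 2) / c) ^ 2 := pow_le_pow_left₀ hβ h 2
    _ = α ^ 3 / c ^ 2 := by rw [div_pow, ← Real.rpow_mul_natCast hα]; norm_num

section

variable {V : Type*} (G : SimpleGraph V)

lemma eBetween_comm (X Y : Set V) : eBetween G X Y = eBetween G Y X := by
  have h : {p : V × V | p.1 ∈ Y ∧ p.2 ∈ X ∧ G.Adj p.1 p.2}
      = Prod.swap '' {p : V × V | p.1 ∈ X ∧ p.2 ∈ Y ∧ G.Adj p.1 p.2} := by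
    ext ⟨a, b⟩
    simp only [Set.image_swap_eq_preimage_swap, Set.mem_preimage, Set.mem_ofPred_eq,
      Prod.fst_swap, Prod.snd_swap, G.adj_comm b a]
    tauto
  rw [eBetween, eBetween, h, Set.ncard_image_of_injective _ Prod.swap_injective]

lemma eBetween_singleton_left (v : V) (Y : Set V) : eBetween G {v} Y = nbrIn G v Y := by
  rw [eBetween, nbrIn,
    ← Set.ncard_image_of_injective (G.neighborSet v ∩ Y) (Prod.mk_right_injective v)]
  congr 1
  ext ⟨a, b⟩
  simp only [Set.mem_singleton_iff, Set.mem_ofPred_eq, Set.mem_image, Set.mem_inter_iff,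
    SimpleGraph.mem_neighborSet, Prod.mk.injEq]
  constructor
  · rintro ⟨rfl, hb, hab⟩
    exact ⟨b, ⟨hab, hb⟩, rfl, rfl⟩
  · rintro ⟨u, ⟨hvu, hu⟩, rfl, rfl⟩
    exact ⟨rfl, hu, hvu⟩

lemma nbrIn_diff_singleton_self (v : V) (S : Set V) : nbrIn G v (S \ {v}) = nbrIn G v S := by
  rw [nbrIn, nbrIn, ← Set.inter_sdiff_assoc, Set.sdiff_singleton_eq_self]
  simp

lemma bip_neighborSet_of_mem {S : Set V} {v : V} (hv : v ∈ S) :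
    (bip G S).neighborSet v = G.neighborSet v ∩ Sᶜ := by
  ext u
  simp only [SimpleGraph.mem_neighborSet, bip, Set.mem_inter_iff, Set.mem_compl_iff]
  tauto

lemma bip_neighborSet_of_notMem {S : Set V} {v : V} (hv : v ∉ S) :
    (bip G S).neighborSet v = G.neighborSet v ∩ S := by
  ext u
  simp only [SimpleGraph.mem_neighborSet, bip, Set.mem_inter_iff]
  tauto

lemma le_ncard_neighborSet_bip {S : Set V} {δ : ℝ} (h : ∀ v ∈ S, δ ≤ nbrIn G v Sᶜ)
    (h' : ∀ v ∈ Sᶜ, δ ≤ nbrIn G v S) (v : V) : δ ≤ ((bip G S).neighborSet v).ncard := by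
  by_cases hv : v ∈ S
  · rw [bip_neighborSet_of_mem G hv]
    exact h v hv
  · rw [bip_neighborSet_of_notMem G hv]
    exact h' v hv

variable [Finite V]

lemma eBetween_union_left {A B : Set V} (h : Disjoint A B) (Y : Set V) :
    eBetween G (A ∪ B) Y = eBetween G A Y + eBetween G B Y := by
  rw [eBetween, eBetween, eBetween, ← Set.ncard_union_eq]
  · congr 1
    ext p
    simp only [Set.mem_union, Set.mem_ofPred_eq]
    tauto
  · exact Set.disjoint_left.2 fun p hA hB => Set.disjoint_left.1 h hA.1 hB.1

lemma eBetween_union_right (X : Set V) {A B : Set V} (h : Disjoint A B) :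
    eBetween G X (A ∪ B) = eBetween G X A + eBetween G X B := by
  simp only [eBetween_comm G X, eBetween_union_left G h]

lemma eBetween_coe_finset (s : Finset V) (Y : Set V) :
    eBetween G s Y = ∑ v ∈ s, nbrIn G v Y := by
  classical
  induction s using Finset.induction_on with
  | empty => simp [eBetween]
  | insert v s hv ih =>
    rw [Finset.coe_insert, Set.insert_eq, eBetween_union_left G (by simpa using hv),
      eBetween_singleton_left, ih, Finset.sum_insert hv]

lemma eBetween_univ_univ (S : Set V) :
    eBetween G Set.univ Set.univ = eBetween G S S + eBetween G Sᶜ Sᶜ + 2 * eBetween G S Sᶜ := by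
  rw [← Set.union_compl_self S, eBetween_union_left G disjoint_compl_right,
    eBetween_union_right G S disjoint_compl_right, eBetween_union_right G Sᶜ disjoint_compl_right,
    eBetween_comm G Sᶜ S]
  ring

lemma eBetween_self (S : Set V) : eBetween G S S = 2 * eIn G S := by
  classical
  have := Fintype.ofFinite V
  set H := (G.induce S).spanningCoe
  have hAdj : ∀ u v, H.Adj u v ↔ G.Adj u v ∧ u ∈ S ∧ v ∈ S := by
    simp [H]
  have hpairs : eBetween G S S = (Finset.univ.filter fun p : V × V => H.Adj p.1 p.2).card := by
    rw [eBetween, ← Set.ncard_coe_finset]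
    congr 1
    ext p
    simp only [Set.mem_ofPred_eq, hAdj, Finset.coe_filter, Finset.mem_univ, true_and]
    tauto
  have hedges : eIn G S = H.edgeFinset.card := by
    rw [eIn, ← Set.ncard_coe_finset, SimpleGraph.coe_edgeFinset]
    congr 1
    ext e
    induction e using Sym2.ind
    simp [hAdj]
  rw [hpairs, hedges, H.two_mul_card_edgeFinset]

lemma nbrIn_add_nbrIn_compl (v : V) (S : Set V) :
    nbrIn G v S + nbrIn G v Sᶜ = (G.neighborSet v).ncard := by
  rw [nbrIn, nbrIn, ← Set.sdiff_eq, Set.ncard_inter_add_ncard_sdiff_eq_ncard]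

lemma lt_one_of_mul_card_le_ncard_neighborSet [Nonempty V] {η : ℝ}
    (hdeg : ∀ v, η * Nat.card V ≤ (G.neighborSet v).ncard) : η < 1 := by
  obtain ⟨v⟩ := ‹Nonempty V›
  have hlt : ((G.neighborSet v).ncard : ℝ) < Nat.card V := by
    exact_mod_cast Set.ncard_lt_card fun h => G.irrefl ((Set.ext_iff.1 h v).2 trivial)
  have hpos : (0 : ℝ) < Nat.card V := by exact_mod_cast Nat.card_pos
  by_contra! h
  nlinarith [hdeg v]

lemma eBetween_le_eBetween_bip_add (S X Y : Set V) :
    eBetween G X Y ≤ eBetween (bip G S) X Y + (eBetween G S S + eBetween G Sᶜ Sᶜ) := by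
  have hsub : {p : V × V | p.1 ∈ X ∧ p.2 ∈ Y ∧ G.Adj p.1 p.2}
      ⊆ {p : V × V | p.1 ∈ X ∧ p.2 ∈ Y ∧ (bip G S).Adj p.1 p.2}
        ∪ ({p : V × V | p.1 ∈ S ∧ p.2 ∈ S ∧ G.Adj p.1 p.2}
          ∪ {p : V × V | p.1 ∈ Sᶜ ∧ p.2 ∈ Sᶜ ∧ G.Adj p.1 p.2}) := by
    rintro ⟨a, b⟩ ⟨ha, hb, hab⟩
    by_cases haS : a ∈ S <;> by_cases hbS : b ∈ S
    · exact .inr (.inl ⟨haS, hbS, hab⟩)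
    · exact .inl ⟨ha, hb, hab, .inl ⟨haS, hbS⟩⟩
    · exact .inl ⟨ha, hb, hab, .inr ⟨haS, hbS⟩⟩
    · exact .inr (.inr ⟨haS, hbS, hab⟩)
  exact (Set.ncard_le_ncard hsub).trans
    ((Set.ncard_union_le _ _).trans (add_le_add le_rfl (Set.ncard_union_le _ _)))

end

section MaxCut

variable {V : Type*} (G : SimpleGraph V)

def IsMaxCut (S : Set V) : Prop :=
  ∀ T : Set V, eBetween G T Tᶜ ≤ eBetween G S Sᶜ

lemma IsMaxCut.compl {S : Set V} (hS : IsMaxCut G S) : IsMaxCut G Sᶜ := fun T => by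
  rw [compl_compl, eBetween_comm G Sᶜ]
  exact hS T

variable [Finite V]

lemma exists_isMaxCut : ∃ S : Set V, IsMaxCut G S :=
  Finite.exists_max fun T : Set V => eBetween G T Tᶜ

variable {G} {S : Set V}

lemma IsMaxCut.nbrIn_le_nbrIn_compl (hS : IsMaxCut G S) {v : V} (hv : v ∈ S) :
    nbrIn G v S ≤ nbrIn G v Sᶜ := by
  set T := S \ {v}
  have hT : S = T ∪ {v} := (Set.sdiff_union_of_subset (Set.singleton_subset_iff.2 hv)).symm
  have hTc : Tᶜ = Sᶜ ∪ {v} := by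
    ext u
    simp only [T, Set.mem_compl_iff, Set.mem_sdiff, Set.mem_union, Set.mem_singleton_iff]
    tauto
  have hdisj : Disjoint T {v} := Set.disjoint_sdiff_left
  have hcutS := eBetween_union_left G hdisj Sᶜ
  rw [← hT, eBetween_singleton_left] at hcutS
  have hcutT :=
    eBetween_union_right G T (Set.disjoint_singleton_right.2 (Set.notMem_compl_iff.2 hv))
  rw [← hTc, eBetween_comm G T {v}, eBetween_singleton_left, nbrIn_diff_singleton_self] at hcutT
  have := hS T
  omega

lemma IsMaxCut.div_two_le_nbrIn_compl (hS : IsMaxCut G S) {δ : ℝ}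
    (hdeg : ∀ v, δ ≤ (G.neighborSet v).ncard) {v : V} (hv : v ∈ S) :
    δ / 2 ≤ nbrIn G v Sᶜ := by
  have hsplit := congrArg (Nat.cast : ℕ → ℝ) (nbrIn_add_nbrIn_compl G v S)
  have hle : (nbrIn G v S : ℝ) ≤ nbrIn G v Sᶜ := by exact_mod_cast hS.nbrIn_le_nbrIn_compl hv
  push_cast at hsplit
  linarith [hdeg v]

lemma IsMaxCut.eIn_add_eIn_compl_le (hS : IsMaxCut G S) (T : Set V) :
    eIn G S + eIn G Sᶜ ≤ eIn G T + eIn G Tᶜ := by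
  have hS' := eBetween_univ_univ G S
  have hT' := eBetween_univ_univ G T
  rw [eBetween_self G S, eBetween_self G Sᶜ] at hS'
  rw [eBetween_self G T, eBetween_self G Tᶜ] at hT'
  have := hS T
  omega

end MaxCut

section Robustness

variable {V : Type*} [Finite V] (H : SimpleGraph V)

lemma ncard_mul_sub_le_eBetween_compl {δ : ℝ}
    (hdeg : ∀ v, δ ≤ (H.neighborSet v).ncard) (X : Set V) :
    X.ncard * (δ - X.ncard) ≤ eBetween H X Xᶜ := by
  classical
  have := Fintype.ofFinite V
  have hnbr : ∀ v, δ - X.ncard ≤ nbrIn H v Xᶜ := fun v => by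
    have hsplit := congrArg (Nat.cast : ℕ → ℝ) (nbrIn_add_nbrIn_compl H v X)
    have hX : (nbrIn H v X : ℝ) ≤ X.ncard := by
      exact_mod_cast Set.ncard_le_ncard Set.inter_subset_right
    push_cast at hsplit
    linarith [hdeg v]
  have hsum := eBetween_coe_finset H X.toFinset Xᶜ
  rw [Set.coe_toFinset] at hsum
  rw [hsum, Nat.cast_sum]
  calc (X.ncard : ℝ) * (δ - X.ncard) = X.toFinset.card • (δ - X.ncard) := by
        rw [nsmul_eq_mul, Set.ncard_eq_toFinset_card']
    _ ≤ _ := Finset.card_nsmul_le_sum _ _ _ fun v _ => hnbr v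

lemma mul_ncard_mul_ncard_compl_le_eBetween {a δ : ℝ}
    (hdeg : ∀ v, δ ≤ (H.neighborSet v).ncard) {X : Set V} (hX : X.ncard + a * Xᶜ.ncard ≤ δ) :
    a * X.ncard * Xᶜ.ncard ≤ eBetween H X Xᶜ := by
  have := ncard_mul_sub_le_eBetween_compl H hdeg X
  nlinarith [(Nat.cast_nonneg X.ncard : (0 : ℝ) ≤ X.ncard)]

end Robustness

lemma div_two_mul_ncard_mul_ncard_compl_le_eBetween_bip {V : Type*} [Finite V]
    (G : SimpleGraph V) {S : Set V} {n : ℕ} (hn : Nat.card V = n) {η α : ℝ}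
    (hα : 0 ≤ α) (hαη : α ≤ η / 2)
    (hdeg : ∀ v, η / 2 * n ≤ ((bip G S).neighborSet v).ncard)
    (hcut : ∀ X : Set V, α * X.ncard * Xᶜ.ncard ≤ eBetween G X Xᶜ)
    (hS : 2 * ((eIn G S : ℝ) + eIn G Sᶜ) ≤ α ^ 3 / 8 * n ^ 2) (X : Set V) :
    α / 2 * X.ncard * Xᶜ.ncard ≤ eBetween (bip G S) X Xᶜ := by
  have hsum : (X.ncard : ℝ) + Xᶜ.ncard = n := by
    rw [← hn, ← Set.ncard_add_ncard_compl X]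
    push_cast
    rfl
  have hX : (0 : ℝ) ≤ X.ncard := Nat.cast_nonneg _
  have hXc : (0 : ℝ) ≤ Xᶜ.ncard := Nat.cast_nonneg _
  by_cases hsmall : (X.ncard : ℝ) ≤ α / 2 * n
  · refine mul_ncard_mul_ncard_compl_le_eBetween _ hdeg ?_
    nlinarith
  by_cases hsmall' : (Xᶜ.ncard : ℝ) ≤ α / 2 * n
  · have := mul_ncard_mul_ncard_compl_le_eBetween (bip G S) (a := α / 2) hdeg (X := Xᶜ)
      (by rw [compl_compl]; nlinarith)
    rw [compl_compl, eBetween_comm] at this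
    linarith
  rw [not_le] at hsmall hsmall'
  have hloss : (eBetween G X Xᶜ : ℝ) ≤ eBetween (bip G S) X Xᶜ + 2 * (eIn G S + eIn G Sᶜ) := by
    have := eBetween_le_eBetween_bip_add G S X Xᶜ
    rw [eBetween_self G S, eBetween_self G Sᶜ] at this
    exact_mod_cast this.trans_eq (by ring)
  have hlarge : α / 2 * (α / 2 * n * (α / 2 * n)) ≤ α / 2 * (X.ncard * Xᶜ.ncard) :=
    mul_le_mul_of_nonneg_left (mul_le_mul hsmall.le hsmall'.le (by positivity) hX)
      (by positivity)
  nlinarith [hcut X]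

/-- let `0 < α ≤ η/2` and `0 < β ≤ α^{3/2}/9`, and let `G` be `(η, α)`-robust
on `n` vertices.  If there is a partition `{S₁', S₂'}` of `V(G)` with `e(Sᵢ') < β²n²` for
both parts, then there is a partition `{S₁, S₂}` with `e(Sᵢ) ≤ βn²`, each vertex of `Sᵢ`
has at least `(η/2)n` neighbors in the opposite part, and `H = G[S₁, S₂]` is
`(η/2, α/2)`-robust. -/
theorem observation_bipartiterobust {V : Type} [Fintype V] (G : SimpleGraph V) (n : ℕ)
    (hn : Fintype.card V = n) (η α β : ℝ) (hα : 0 < α) (hαη : α ≤ η / 2)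
    (hβ : 0 < β) (hβα : β ≤ α ^ ((3 : ℝ) / 2) / 9)
    (hdeg : ∀ v : V, η * n ≤ ((G.neighborSet v).ncard : ℝ))
    (hcut : ∀ X : Set V, α * X.ncard * Xᶜ.ncard ≤ (eBetween G X Xᶜ : ℝ))
    (S₁' : Set V) (h1' : (eIn G S₁' : ℝ) < β ^ 2 * n ^ 2)
    (h2' : (eIn G S₁'ᶜ : ℝ) < β ^ 2 * n ^ 2) :
    ∃ S₁ : Set V,
      (eIn G S₁ : ℝ) ≤ β * n ^ 2 ∧ (eIn G S₁ᶜ : ℝ) ≤ β * n ^ 2 ∧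
      (∀ v ∈ S₁, η / 2 * n ≤ (nbrIn G v S₁ᶜ : ℝ)) ∧
      (∀ v ∈ S₁ᶜ, η / 2 * n ≤ (nbrIn G v S₁ : ℝ)) ∧
      (∀ v : V, η / 2 * n ≤ (((bip G S₁).neighborSet v).ncard : ℝ)) ∧
      (∀ X : Set V, α / 2 * X.ncard * Xᶜ.ncard ≤ (eBetween (bip G S₁) X Xᶜ : ℝ)) := by
  have : Nonempty V := by
    have hpos : (0 : ℝ) < β ^ 2 * n ^ 2 := (Nat.cast_nonneg _).trans_lt h1'
    rw [← Fintype.card_pos_iff, hn, Nat.pos_iff_ne_zero]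
    rintro rfl
    simp at hpos
  have hn' : Nat.card V = n := Nat.card_eq_fintype_card.trans hn
  have hη : η < 1 := lt_one_of_mul_card_le_ncard_neighborSet G (hn' ▸ hdeg)
  have hβsq := sq_le_of_le_rpow_three_halves_div 9 hα.le hβ.le hβα
  have hβ1 : β ≤ 1 / 9 :=
    hβα.trans (by linarith [Real.rpow_le_one hα.le (by linarith) (by norm_num : (0 : ℝ) ≤ 3 / 2)])
  obtain ⟨S, hS⟩ := exists_isMaxCut G
  have hedges : (eIn G S : ℝ) + eIn G Sᶜ < 2 * β ^ 2 * n ^ 2 := by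
    have : ((eIn G S + eIn G Sᶜ : ℕ) : ℝ) ≤ eIn G S₁' + eIn G S₁'ᶜ := by
      exact_mod_cast hS.eIn_add_eIn_compl_le S₁'
    push_cast at this
    linarith
  have hnbr : ∀ v ∈ S, η / 2 * n ≤ (nbrIn G v Sᶜ : ℝ) := fun v hv => by
    linarith [hS.div_two_le_nbrIn_compl hdeg hv]
  have hnbr' : ∀ v ∈ Sᶜ, η / 2 * n ≤ (nbrIn G v S : ℝ) := fun v hv => by
    linarith [compl_compl S ▸ hS.compl.div_two_le_nbrIn_compl hdeg hv]
  have hdegH := le_ncard_neighborSet_bip G hnbr hnbr'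
  have hβn : 0 ≤ β * n ^ 2 * (1 - 2 * β) := mul_nonneg (by positivity) (by linarith)
  refine ⟨S, ?_, ?_, hnbr, hnbr', hdegH,
    div_two_mul_ncard_mul_ncard_compl_le_eBetween_bip G hn' hα.le hαη hdegH hcut
      (by nlinarith)⟩ <;>
  nlinarith [Nat.cast_nonneg (α := ℝ) (eIn G S), Nat.cast_nonneg (α := ℝ) (eIn G Sᶜ)]
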